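/- arXiv:2310.17517 — 8 statements merged into one kernel-verified Lean document; each statement's English description precedes it below -/
import Mathlib

section
/- Let α₀ > β₀ and β₁ > α₁ be real numbers with β₀ > α₁ (so a's payoffs do not lie in the convex hull of b's payoffs). Then there exists a strictly increasing concave function φ : ℝ → ℝ such that (φ(β₁) − φ(α₁))/(β₁ − α₁) > (φ(α₀) − φ(β₀))/(α₀ − β₀). -/
/-! Take φ with slope 1 up to β₀ and slope 1/2 after it. The chord of φ over [β₀, α₀] has slope
exactly 1/2, while the chord over [α₁, β₁] starts in the steeper region because α₁ < β₀. -/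

def kink (k c y : ℝ) : ℝ := min y (k * y + (1 - k) * c)

theorem kink_strictMono {k : ℝ} (hk : 0 < k) (c : ℝ) : StrictMono (kink k c) :=
  fun _ _ hxy => min_lt_min hxy (by gcongr)

theorem concaveOn_kink (k c : ℝ) : ConcaveOn ℝ Set.univ (kink k c) :=
  (concaveOn_id convex_univ).inf
    (((LinearMap.lsmul ℝ ℝ k).concaveOn convex_univ).add_const ((1 - k) * c))

theorem kink_of_le {k c y : ℝ} (hk : k ≤ 1) (hy : c ≤ y) : kink k c y = k * y + (1 - k) * c :=
  min_eq_right (by nlinarith)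

theorem div_kink_sub_kink_of_le {k c x y : ℝ} (hk : k ≤ 1) (hx : c ≤ x) (hy : c ≤ y)
    (hxy : x ≠ y) : (kink k c y - kink k c x) / (y - x) = k := by
  rw [kink_of_le hk hx, kink_of_le hk hy, div_eq_iff (sub_ne_zero.2 hxy.symm)]
  ring

theorem lt_div_kink_sub_kink {k c x y : ℝ} (hk : k < 1) (hx : x < c) (hxy : x < y) :
    k < (kink k c y - kink k c x) / (y - x) := by
  rw [lt_div_iff₀ (sub_pos.2 hxy)]
  have hkink_x : kink k c x ≤ x := min_le_left _ _
  have hkink_y : x + k * (y - x) < kink k c y := lt_min (by nlinarith) (by nlinarith)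
  linarith

theorem stmt_1 (α₀ α₁ β₀ β₁ : ℝ) (h0 : α₀ > β₀) (h1 : β₁ > α₁)
    (hfail : β₀ > α₁) :
    ∃ φ : ℝ → ℝ, StrictMono φ ∧ ConcaveOn ℝ Set.univ φ ∧
      (φ β₁ - φ α₁) / (β₁ - α₁) > (φ α₀ - φ β₀) / (α₀ - β₀) := by
  refine ⟨kink (1 / 2) β₀, kink_strictMono (by norm_num) β₀, concaveOn_kink _ _, ?_⟩
  rw [div_kink_sub_kink_of_le (by norm_num) le_rfl h0.le h0.ne]
  exact lt_div_kink_sub_kink (by norm_num) hfail h1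
end

section
/- Let α₀ > β₀ and β₁ > α₁ be real numbers. If the function W(x) = max{(1−x)α₀ + xα₁, (1−x)β₀ + xβ₁} is monotone on [0,1] and |α₁ − α₀| ≤ |β₁ − β₀|, then β₁ ≥ α₀ and α₁ ≥ β₀. -/
/-!
The two payoff lines cross at some `t ∈ (0, 1)`, so `W 0 = α₀`, `W t` is the common value of both
lines at `t`, and `W 1 = β₁`. If `W` is monotone, comparing `W 0` with `W t` and with `W 1` gives
`α₀ ≤ α₁` and `α₀ ≤ β₁`. If `W` is antitone, the same comparisons force both lines to be
nonincreasing, and then `|α₁ - α₀| ≤ |β₁ - β₀|` contradicts the two lines crossing.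
-/

open AffineMap

lemma exists_mem_Ioo_lineMap_eq_lineMap {a₀ a₁ b₀ b₁ : ℝ} (h₀ : b₀ < a₀) (h₁ : a₁ < b₁) :
    ∃ t ∈ Set.Ioo (0 : ℝ) 1, lineMap a₀ a₁ t = lineMap b₀ b₁ t := by
  have hd : 0 < a₀ - b₀ := sub_pos.2 h₀
  have he : 0 < b₁ - a₁ := sub_pos.2 h₁
  refine ⟨(a₀ - b₀) / ((a₀ - b₀) + (b₁ - a₁)), ⟨by positivity, ?_⟩, ?_⟩
  · rw [div_lt_one (by positivity)]
    linarith
  · simp only [lineMap_apply_ring']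
    field_simp
    ring

theorem stmt_4 (α₀ α₁ β₀ β₁ : ℝ) (h0 : α₀ > β₀) (h1 : β₁ > α₁)
    (hW : MonotoneOn (fun x : ℝ => max ((1 - x) * α₀ + x * α₁) ((1 - x) * β₀ + x * β₁))
        (Set.Icc (0:ℝ) 1) ∨
      AntitoneOn (fun x : ℝ => max ((1 - x) * α₀ + x * α₁) ((1 - x) * β₀ + x * β₁))
        (Set.Icc (0:ℝ) 1))
    (hslope : |α₁ - α₀| ≤ |β₁ - β₀|) :
    β₁ ≥ α₀ ∧ α₁ ≥ β₀ := by
  obtain ⟨t, ⟨ht₀, ht₁⟩, hcross⟩ := exists_mem_Ioo_lineMap_eq_lineMap h0 h1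
  simp only [← lineMap_apply_ring] at hW
  set W := fun x : ℝ => max (lineMap α₀ α₁ x) (lineMap β₀ β₁ x)
  have hW₀ : W 0 = α₀ := by simp [W, h0.le]
  have hWt : W t = lineMap α₀ α₁ t := by simp [W, hcross]
  have hW₁ : W 1 = β₁ := by simp [W, h1.le]
  have h0mem : (0 : ℝ) ∈ Set.Icc (0 : ℝ) 1 := Set.left_mem_Icc.2 zero_le_one
  have h1mem : (1 : ℝ) ∈ Set.Icc (0 : ℝ) 1 := Set.right_mem_Icc.2 zero_le_one
  have htmem : t ∈ Set.Icc (0 : ℝ) 1 := ⟨ht₀.le, ht₁.le⟩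
  rcases hW with hmono | hanti
  · have hα : α₀ ≤ α₁ := by
      have := hmono h0mem htmem ht₀.le
      rwa [hW₀, hWt, left_le_lineMap_iff_le ht₀] at this
    have hαβ : α₀ ≤ β₁ := by
      have := hmono h0mem h1mem zero_le_one
      rwa [hW₀, hW₁] at this
    exact ⟨hαβ, by linarith⟩
  · have hα : α₁ ≤ α₀ := by
      have := hanti h0mem htmem ht₀.le
      rwa [hW₀, hWt, lineMap_le_left_iff_le ht₀] at this
    have hβ : β₁ ≤ β₀ := by
      have := hanti htmem h1mem ht₁.le
      rwa [hW₁, hWt, hcross, right_le_lineMap_iff_le ht₁] at this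
    rw [abs_of_nonpos (sub_nonpos.2 hα), abs_of_nonpos (sub_nonpos.2 hβ)] at hslope
    linarith
end

section
/- Let Θ be a finite set of states, and let α, β : Θ → ℝ be payoffs of actions a and b with α_θ ≠ β_θ for all θ. Let 𝒜 = {θ : α_θ > β_θ} and ℬ = {θ : β_θ > α_θ}, both nonempty. Then the following are equivalent: (i) for every probability vector x on Θ and every strictly increasing concave φ : ℝ → ℝ, Σ_θ x_θ α_θ ≥ Σ_θ x_θ β_θ implies Σ_θ x_θ φ(α_θ) ≥ Σ_θ x_θ φ(β_θ); (ii) for every θ ∈ 𝒜 and θ′ ∈ ℬ, β_{θ′} ≥ α_θ and α_{θ′} ≥ β_θ. -/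
open Finset

-- slope comparison for concave functions: sliding both endpoints right decreases the secant slope
lemma concave_slope_le {φ : ℝ → ℝ} (hφ : ConcaveOn ℝ Set.univ φ)
    {u1 v1 u2 v2 : ℝ} (h1 : u1 < v1) (h2 : u2 < v2) (hu : u1 ≤ u2) (hv : v1 ≤ v2) :
    (φ v2 - φ u2) / (v2 - u2) ≤ (φ v1 - φ u1) / (v1 - u1) := by
  have hg : ConvexOn ℝ Set.univ (-φ) := hφ.neg
  have hu1v2 : u1 < v2 := lt_of_lt_of_le h1 hv
  -- step 1: slope(u1, v2) ≤ slope(u1, v1)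
  have s1 : (φ v2 - φ u1) / (v2 - u1) ≤ (φ v1 - φ u1) / (v1 - u1) := by
    have := hg.secant_mono (a := u1) (x := v1) (y := v2) trivial trivial trivial
      (ne_of_gt h1) (ne_of_gt hu1v2) hv
    simp only [Pi.neg_apply] at this
    have e1 : (-φ v1 - -φ u1) / (v1 - u1) = -((φ v1 - φ u1) / (v1 - u1)) := by ring
    have e2 : (-φ v2 - -φ u1) / (v2 - u1) = -((φ v2 - φ u1) / (v2 - u1)) := by ring
    rw [e1, e2, neg_le_neg_iff] at this
    exact this
  -- step 2: slope(u2, v2) ≤ slope(u1, v2)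
  have s2 : (φ v2 - φ u2) / (v2 - u2) ≤ (φ v2 - φ u1) / (v2 - u1) := by
    have := hg.secant_mono (a := v2) (x := u1) (y := u2) trivial trivial trivial
      (ne_of_lt hu1v2) (ne_of_lt h2) hu
    simp only [Pi.neg_apply] at this
    have e1 : (-φ u1 - -φ v2) / (u1 - v2) = -((φ v2 - φ u1) / (v2 - u1)) := by
      rw [neg_div', div_eq_div_iff (by linarith) (by linarith)]; ring
    have e2 : (-φ u2 - -φ v2) / (u2 - v2) = -((φ v2 - φ u2) / (v2 - u2)) := by
      rw [neg_div', div_eq_div_iff (by linarith) (by linarith)]; ring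
    rw [e1, e2, neg_le_neg_iff] at this
    exact this
  exact s2.trans s1

lemma sum_two_mul {Θ : Type*} [Fintype Θ] [DecidableEq Θ] {θ0 θ1 : Θ} (hne : θ0 ≠ θ1) (c0 c1 : ℝ) (g : Θ → ℝ) :
    ∑ θ, (if θ = θ0 then c0 else if θ = θ1 then c1 else 0) * g θ = c0 * g θ0 + c1 * g θ1 := by
  rw [← Finset.sum_subset (Finset.subset_univ {θ0, θ1})]
  · rw [Finset.sum_pair hne, if_pos rfl, if_neg hne.symm, if_pos rfl]
  · intro θ _ hθ
    simp only [Finset.mem_insert, Finset.mem_singleton, not_or] at hθ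
    rw [if_neg hθ.1, if_neg hθ.2, zero_mul]

open Finset in
theorem stmt_5 {Θ : Type*} [Fintype Θ] (α β : Θ → ℝ)
    (hne : ∀ θ, α θ ≠ β θ)
    (hA : ∃ θ, α θ > β θ) (hB : ∃ θ, β θ > α θ) :
    (∀ x : Θ → ℝ, (∀ θ, 0 ≤ x θ) → ∑ θ, x θ = 1 →
      ∀ φ : ℝ → ℝ, StrictMono φ → ConcaveOn ℝ Set.univ φ →
        (∑ θ, x θ * α θ ≥ ∑ θ, x θ * β θ) →
        (∑ θ, x θ * φ (α θ) ≥ ∑ θ, x θ * φ (β θ))) ↔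
    (∀ θ θ', α θ > β θ → β θ' > α θ' → β θ' ≥ α θ ∧ α θ' ≥ β θ) := by
  classical
  constructor
  · -- (i) → (ii)
    intro hi θ0 θ1 h0 h1
    have hθne : θ0 ≠ θ1 := by
      intro h; rw [h] at h0; linarith
    set d0 : ℝ := α θ0 - β θ0 with hd0
    set d1 : ℝ := β θ1 - α θ1 with hd1
    have hd0pos : 0 < d0 := by rw [hd0]; linarith
    have hd1pos : 0 < d1 := by rw [hd1]; linarith
    have hDpos : 0 < d0 + d1 := by linarith
    set c0 : ℝ := d1 / (d0 + d1) with hc0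
    set c1 : ℝ := d0 / (d0 + d1) with hc1
    have hc0pos : 0 < c0 := div_pos hd1pos hDpos
    have hc1pos : 0 < c1 := div_pos hd0pos hDpos
    set x : Θ → ℝ := fun θ => if θ = θ0 then c0 else if θ = θ1 then c1 else 0 with hx
    have hxnn : ∀ θ, 0 ≤ x θ := by
      intro θ; simp only [hx]
      split_ifs <;> [exact hc0pos.le; exact hc1pos.le; exact le_rfl]
    have hxsum : ∑ θ, x θ = 1 := by
      have := sum_two_mul hθne c0 c1 (fun _ => (1:ℝ))
      simp only [mul_one] at this
      rw [hx, this, hc0, hc1]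
      field_simp
      ring
    have hbal : c0 * d0 = c1 * d1 := by
      rw [hc0, hc1]; field_simp
    have hsum : ∀ g : Θ → ℝ, ∑ θ, x θ * g θ = c0 * g θ0 + c1 * g θ1 :=
      fun g => sum_two_mul hθne c0 c1 g
    have hprem : ∑ θ, x θ * α θ ≥ ∑ θ, x θ * β θ := by
      rw [hsum α, hsum β]
      have : c0 * α θ0 + c1 * α θ1 - (c0 * β θ0 + c1 * β θ1) = c0 * d0 - c1 * d1 := by
        rw [hd0, hd1]; ring
      nlinarith [hbal]
    constructor
    · -- β θ1 ≥ α θ0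
      by_contra hcon
      push_neg at hcon  -- β θ1 < α θ0
      set c : ℝ := β θ1 with hc
      set φ : ℝ → ℝ := fun t => t / 2 + min t c / 2 with hφ
      have hφmono : StrictMono φ := by
        intro s t hst
        have h1 : min s c ≤ min t c := min_le_min hst.le le_rfl
        simp only [hφ]
        have : s / 2 < t / 2 := by linarith
        linarith
      have hφconc : ConcaveOn ℝ Set.univ φ := by
        have hmin : ConcaveOn ℝ Set.univ (fun t : ℝ => min t c) :=
          (concaveOn_id convex_univ).inf (concaveOn_const c convex_univ)
        have h2 : ConcaveOn ℝ Set.univ (fun t : ℝ => t / 2) := by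
          refine ⟨convex_univ, fun p _ q _ a b ha hb hab => le_of_eq ?_⟩
          simp only [smul_eq_mul]
          ring
        have h3 := h2.add (hmin.smul (c := (1/2 : ℝ)) (by norm_num))
        convert h3 using 1
        · rfl
        funext t
        simp only [hφ, Pi.add_apply, smul_eq_mul]
        ring
      have := hi x hxnn hxsum φ hφmono hφconc hprem
      rw [hsum (fun θ => φ (α θ)), hsum (fun θ => φ (β θ))] at this
      -- compute φ values
      have hφb1 : φ (β θ1) - φ (α θ1) = d1 := by
        simp only [hφ]
        rw [min_eq_left hc.ge, min_eq_left (by rw [hc]; linarith : α θ1 ≤ c)]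
        rw [hd1]; ring
      have hφa0 : φ (α θ0) - φ (β θ0) < d0 := by
        simp only [hφ]
        rw [min_eq_right (by rw [hc]; linarith : c ≤ α θ0)]
        rcases le_or_gt (β θ0) c with hbc | hbc
        · rw [min_eq_left hbc, hd0]
          have : c < α θ0 := hcon
          linarith
        · rw [min_eq_right hbc.le, hd0]
          linarith
      nlinarith [this, hφb1, hφa0, hbal, hc0pos, hc1pos]
    · -- α θ1 ≥ β θ0
      by_contra hcon
      push_neg at hcon  -- α θ1 < β θ0
      set c : ℝ := β θ0 with hc
      set φ : ℝ → ℝ := fun t => t + min t c with hφ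
      have hφmono : StrictMono φ := by
        intro s t hst
        have h1 : min s c ≤ min t c := min_le_min hst.le le_rfl
        simp only [hφ]
        linarith
      have hφconc : ConcaveOn ℝ Set.univ φ := by
        have hmin : ConcaveOn ℝ Set.univ (fun t : ℝ => min t c) :=
          (concaveOn_id convex_univ).inf (concaveOn_const c convex_univ)
        exact (concaveOn_id convex_univ).add hmin
      have := hi x hxnn hxsum φ hφmono hφconc hprem
      rw [hsum (fun θ => φ (α θ)), hsum (fun θ => φ (β θ))] at this
      have hφa0 : φ (α θ0) - φ (β θ0) = d0 := by
        simp only [hφ]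
        rw [min_eq_right (by rw [hc]; linarith : c ≤ α θ0), min_eq_left (le_refl (β θ0))]
        rw [hd0]; ring
      have hφb1 : φ (β θ1) - φ (α θ1) > d1 := by
        simp only [hφ]
        rw [min_eq_left (by rw [hc]; linarith : α θ1 ≤ c)]
        have : α θ1 < min (β θ1) c := lt_min h1 hcon
        rw [hd1]
        linarith
      nlinarith [this, hφb1, hφa0, hbal, hc0pos, hc1pos]
  · -- (ii) → (i)
    intro h x hxnn hxsum φ hφmono hφconc hprem
    set A : Finset Θ := Finset.univ.filter (fun θ => β θ < α θ) with hAdef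
    have hAne : A.Nonempty := by
      obtain ⟨θ, hθ⟩ := hA
      exact ⟨θ, by simp [hAdef, hθ]⟩
    set s : Θ → ℝ := fun θ => (φ (α θ) - φ (β θ)) / (α θ - β θ) with hs
    set lam : ℝ := A.inf' hAne s with hlam
    have hspos : ∀ θ ∈ A, 0 < s θ := by
      intro θ hθ
      simp only [hAdef, Finset.mem_filter] at hθ
      exact div_pos (sub_pos.2 (hφmono hθ.2)) (sub_pos.2 hθ.2)
    have hlampos : 0 < lam := by
      rw [hlam, Finset.lt_inf'_iff]
      exact hspos
    -- termwise inequality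
    have hterm : ∀ θ, lam * (x θ * (α θ - β θ)) ≤ x θ * (φ (α θ) - φ (β θ)) := by
      intro θ
      rcases (hne θ).lt_or_gt with hlt | hgt
      · -- α θ < β θ : θ in B, s θ ≥ lam needed reversed: lam ≥ s θ
        have hBθ : α θ < β θ := hlt
        have hles : s θ ≤ lam := by
          rw [hlam]
          apply Finset.le_inf'
          intro θ'' hθ''
          simp only [hAdef, Finset.mem_filter] at hθ''
          have hh := h θ'' θ hθ''.2 hBθ
          have hsθ : s θ = (φ (β θ) - φ (α θ)) / (β θ - α θ) := by
            rw [hs]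
            rw [div_eq_div_iff (by linarith) (by linarith)]; ring
          rw [hsθ, hs]
          exact concave_slope_le hφconc hθ''.2 hBθ hh.2 hh.1
        have hd : α θ - β θ < 0 := by linarith
        have h1 : lam * (α θ - β θ) ≤ s θ * (α θ - β θ) :=
          mul_le_mul_of_nonpos_right hles hd.le
        have h2 : s θ * (α θ - β θ) = φ (α θ) - φ (β θ) := by
          rw [hs]; exact div_mul_cancel₀ _ (sub_ne_zero.2 (hne θ))
        calc lam * (x θ * (α θ - β θ)) = x θ * (lam * (α θ - β θ)) := by ring
          _ ≤ x θ * (s θ * (α θ - β θ)) := mul_le_mul_of_nonneg_left h1 (hxnn θ)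
          _ = x θ * (φ (α θ) - φ (β θ)) := by rw [h2]
      · -- β θ < α θ : θ ∈ A
        have hAθ : θ ∈ A := by simp [hAdef, hgt]
        have hge : lam ≤ s θ := by rw [hlam]; exact Finset.inf'_le s hAθ
        have hd : 0 < α θ - β θ := by linarith
        have h1 : lam * (α θ - β θ) ≤ s θ * (α θ - β θ) :=
          mul_le_mul_of_nonneg_right hge hd.le
        have h2 : s θ * (α θ - β θ) = φ (α θ) - φ (β θ) := by
          rw [hs]; exact div_mul_cancel₀ _ (sub_ne_zero.2 (hne θ))
        calc lam * (x θ * (α θ - β θ)) = x θ * (lam * (α θ - β θ)) := by ring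
          _ ≤ x θ * (s θ * (α θ - β θ)) := mul_le_mul_of_nonneg_left h1 (hxnn θ)
          _ = x θ * (φ (α θ) - φ (β θ)) := by rw [h2]
    have hsumineq : ∑ θ, lam * (x θ * (α θ - β θ)) ≤ ∑ θ, x θ * (φ (α θ) - φ (β θ)) :=
      Finset.sum_le_sum (fun θ _ => hterm θ)
    have e1 : ∑ θ, lam * (x θ * (α θ - β θ)) = lam * (∑ θ, x θ * α θ - ∑ θ, x θ * β θ) := by
      rw [← Finset.mul_sum]
      congr 1
      rw [← Finset.sum_sub_distrib]
      congr 1; ext θ; ring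
    have e2 : ∑ θ, x θ * (φ (α θ) - φ (β θ)) = ∑ θ, x θ * φ (α θ) - ∑ θ, x θ * φ (β θ) := by
      rw [← Finset.sum_sub_distrib]
      congr 1; ext θ; ring
    rw [e1, e2] at hsumineq
    have hnn : 0 ≤ lam * (∑ θ, x θ * α θ - ∑ θ, x θ * β θ) :=
      mul_nonneg hlampos.le (by linarith [hprem])
    linarith
end

section
/- Let Θ be a finite set and α, β : Θ → ℝ with α_θ ≠ β_θ for all θ, neither action weakly dominated. Suppose that for every probability vector x on Θ, the CDF F^x_a of α single-crosses the CDF F^x_b of β from below. Then a is safer than b: for every x and every strictly increasing concave φ, Σ x_θ α_θ ≥ Σ x_θ β_θ implies Σ x_θ φ(α_θ) ≥ Σ x_θ φ(β_θ). -/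
open Finset

private lemma slope_le_slope' {φ : ℝ → ℝ} (hconc : ConcaveOn ℝ Set.univ φ)
    {a b c d : ℝ} (hab : a < b) (hcd : c < d) (hbc : b ≤ c) :
    (φ d - φ c) / (d - c) ≤ (φ b - φ a) / (b - a) := by
  rcases eq_or_lt_of_le hbc with h | h
  · subst h
    exact hconc.slope_anti_adjacent (Set.mem_univ _) (Set.mem_univ _) hab hcd
  · calc (φ d - φ c) / (d - c) ≤ (φ c - φ b) / (c - b) :=
        hconc.slope_anti_adjacent (Set.mem_univ _) (Set.mem_univ _) h hcd
    _ ≤ (φ b - φ a) / (b - a) :=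
        hconc.slope_anti_adjacent (Set.mem_univ _) (Set.mem_univ _) hab h

private lemma telescope_rep (g : ℝ → ℝ) (v : ℕ → ℝ) (n k : ℕ) (hk : k < n)
    (hv : ∀ i j, i < j → j < n → v i < v j) :
    g (v k) = g (v 0) +
      ∑ i ∈ Finset.range (n-1), (if v (i+1) ≤ v k then g (v (i+1)) - g (v i) else 0) := by
  have hvle : ∀ i j, i ≤ j → j < n → v i ≤ v j := by
    intro i j h hj
    rcases eq_or_lt_of_le h with h' | h'
    · rw [h']
    · exact (hv i j h' hj).le
  have key : ∀ i ∈ Finset.range (n-1),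
      (if v (i+1) ≤ v k then g (v (i+1)) - g (v i) else 0)
        = (if i < k then g (v (i+1)) - g (v i) else 0) := by
    intro i hi
    rw [Finset.mem_range] at hi
    have hiff : v (i+1) ≤ v k ↔ i < k := by
      constructor
      · intro h
        by_contra hk'
        push_neg at hk'
        exact absurd h (not_le.2 (hv k (i+1) (by omega) (by omega)))
      · intro h
        exact hvle (i+1) k (by omega) hk
    simp [hiff]
  rw [Finset.sum_congr rfl key, ← Finset.sum_filter]
  have hfil : (Finset.range (n-1)).filter (fun i => i < k) = Finset.range k := by
    ext i
    simp only [Finset.mem_filter, Finset.mem_range]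
    omega
  rw [hfil, Finset.sum_range_sub (fun i => g (v i))]
  ring

private lemma exp_formula {Θ : Type*} [Fintype Θ] [DecidableEq Θ]
    (x γ : Θ → ℝ) (g : ℝ → ℝ) (v : ℕ → ℝ) (n : ℕ)
    (hv : ∀ i j, i < j → j < n → v i < v j)
    (hmem : ∀ θ, ∃ k, k < n ∧ γ θ = v k) :
    ∑ θ, x θ * g (γ θ) = (∑ θ, x θ) * g (v 0)
      + ∑ i ∈ Finset.range (n-1), (g (v (i+1)) - g (v i)) *
          (∑ θ ∈ univ.filter (fun θ => v (i+1) ≤ γ θ), x θ) := by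
  classical
  have h1 : ∀ θ : Θ, x θ * g (γ θ) = x θ * g (v 0) +
      ∑ i ∈ Finset.range (n-1),
        (if v (i+1) ≤ γ θ then x θ * (g (v (i+1)) - g (v i)) else 0) := by
    intro θ
    obtain ⟨k, hk, hγ⟩ := hmem θ
    rw [hγ, telescope_rep g v n k hk hv, mul_add, Finset.mul_sum]
    congr 1
    refine Finset.sum_congr rfl fun i _ => ?_
    split <;> simp
  rw [Finset.sum_congr rfl fun θ _ => h1 θ, Finset.sum_add_distrib, ← Finset.sum_mul]
  congr 1
  rw [Finset.sum_comm]
  refine Finset.sum_congr rfl fun i _ => ?_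
  rw [← Finset.sum_filter, Finset.mul_sum]
  exact Finset.sum_congr rfl fun θ _ => by ring

open Finset in
theorem stmt_8 {Θ : Type*} [Fintype Θ] [DecidableEq Θ] (α β : Θ → ℝ)
    (hne : ∀ θ, α θ ≠ β θ)
    (hA : ∃ θ, α θ > β θ) (hB : ∃ θ, β θ > α θ)
    (hsc : ∀ x : Θ → ℝ, (∀ θ, 0 ≤ x θ) → ∑ θ, x θ = 1 →
      ∃ vbar : ℝ,
        (∀ v ≤ vbar, (∑ θ ∈ univ.filter (fun θ => β θ ≤ v), x θ) ≥
            ∑ θ ∈ univ.filter (fun θ => α θ ≤ v), x θ) ∧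
        (∀ v ≥ vbar, (∑ θ ∈ univ.filter (fun θ => α θ ≤ v), x θ) ≥
            ∑ θ ∈ univ.filter (fun θ => β θ ≤ v), x θ)) :
    ∀ x : Θ → ℝ, (∀ θ, 0 ≤ x θ) → ∑ θ, x θ = 1 →
      ∀ φ : ℝ → ℝ, StrictMono φ → ConcaveOn ℝ Set.univ φ →
        (∑ θ, x θ * α θ ≥ ∑ θ, x θ * β θ) →
        (∑ θ, x θ * φ (α θ) ≥ ∑ θ, x θ * φ (β θ)) := by
  classical
  intro x hx hx1 φ hφ hconc hmean
  obtain ⟨vbar, hL, hR⟩ := hsc x hx hx1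
  set S : Finset ℝ := (univ.image α) ∪ (univ.image β) with hSdef
  set l : List ℝ := S.sort (· ≤ ·) with hldef
  set n : ℕ := l.length with hndef
  set v : ℕ → ℝ := fun i => l.getD i 0 with hvdef
  have hsorted : List.Pairwise (· < ·) l := (Finset.sortedLT_sort S).pairwise
  have hvstrict : ∀ i j, i < j → j < n → v i < v j := by
    intro i j hij hj
    have hi : i < n := lt_trans hij hj
    have h := List.pairwise_iff_getElem.mp hsorted i j hi hj hij
    show l.getD i 0 < l.getD j 0
    rw [List.getD_eq_getElem l 0 hi, List.getD_eq_getElem l 0 hj]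
    exact h
  have hvle : ∀ i j, i ≤ j → j < n → v i ≤ v j := by
    intro i j h hj
    rcases eq_or_lt_of_le h with h' | h'
    · rw [h']
    · exact (hvstrict i j h' hj).le
  have hmemS : ∀ t, t ∈ S → ∃ k, k < n ∧ t = v k := by
    intro t ht
    rw [← Finset.mem_sort (α := ℝ) (· ≤ ·)] at ht
    obtain ⟨k, hk, hkeq⟩ := List.mem_iff_getElem.mp ht
    refine ⟨k, hk, ?_⟩
    show t = l.getD k 0
    rw [List.getD_eq_getElem l 0 hk, hkeq]
  have hmemα : ∀ θ, ∃ k, k < n ∧ α θ = v k := fun θ =>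
    hmemS _ (Finset.mem_union_left _ (Finset.mem_image_of_mem α (Finset.mem_univ θ)))
  have hmemβ : ∀ θ, ∃ k, k < n ∧ β θ = v k := fun θ =>
    hmemS _ (Finset.mem_union_right _ (Finset.mem_image_of_mem β (Finset.mem_univ θ)))
  -- CDFs at grid points
  set Fa : ℕ → ℝ := fun i => ∑ θ ∈ univ.filter (fun θ => α θ ≤ v i), x θ with hFadef
  set Fb : ℕ → ℝ := fun i => ∑ θ ∈ univ.filter (fun θ => β θ ≤ v i), x θ with hFbdef
  -- complement identity
  have hcomp : ∀ (γ : Θ → ℝ), (∀ θ, ∃ k, k < n ∧ γ θ = v k) → ∀ i, i + 1 < n →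
      (∑ θ ∈ univ.filter (fun θ => v (i+1) ≤ γ θ), x θ)
        = 1 - ∑ θ ∈ univ.filter (fun θ => γ θ ≤ v i), x θ := by
    intro γ hmem i hi
    have hiff : ∀ θ, (v (i+1) ≤ γ θ) ↔ ¬ (γ θ ≤ v i) := by
      intro θ
      obtain ⟨k, hk, hγ⟩ := hmem θ
      rcases le_or_gt k i with h | h
      · have h1 : γ θ ≤ v i := hγ ▸ hvle k i h (by omega)
        have h2 : ¬ v (i+1) ≤ γ θ := by
          rw [hγ]; exact not_le.2 (hvstrict k (i+1) (by omega) hi)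
        simp [h1, h2]
      · have h1 : v (i+1) ≤ γ θ := hγ ▸ hvle (i+1) k (by omega) hk
        have h2 : ¬ γ θ ≤ v i := by
          rw [hγ]; exact not_le.2 (hvstrict i k h hk)
        simp [h1, h2]
    have hfil : univ.filter (fun θ => v (i+1) ≤ γ θ)
        = univ.filter (fun θ => ¬ (γ θ ≤ v i)) :=
      Finset.filter_congr fun θ _ => by rw [hiff θ]
    have := Finset.sum_filter_add_sum_filter_not univ (fun θ => γ θ ≤ v i) x
    rw [hfil]
    rw [hx1] at this
    linarith
  -- difference formula
  have diff : ∀ g : ℝ → ℝ,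
      (∑ θ, x θ * g (α θ)) - (∑ θ, x θ * g (β θ))
        = ∑ i ∈ Finset.range (n-1), (g (v (i+1)) - g (v i)) * (Fb i - Fa i) := by
    intro g
    rw [exp_formula x α g v n hvstrict hmemα, exp_formula x β g v n hvstrict hmemβ]
    rw [add_sub_add_left_eq_sub, ← Finset.sum_sub_distrib]
    refine Finset.sum_congr rfl fun i hi => ?_
    rw [Finset.mem_range] at hi
    rw [hcomp α hmemα i (by omega), hcomp β hmemβ i (by omega)]
    ring
  have hid := diff (fun t => t)
  have hφd := diff φ
  have hmean' : 0 ≤ ∑ i ∈ Finset.range (n-1), (v (i+1) - v i) * (Fb i - Fa i) := by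
    rw [← hid]; linarith [hmean]
  -- single crossing at grid points
  have hDpos : ∀ i, v i ≤ vbar → 0 ≤ Fb i - Fa i := fun i h => by
    have := hL (v i) h; simp only [hFadef, hFbdef]; linarith [this]
  have hDneg : ∀ i, vbar ≤ v i → Fb i - Fa i ≤ 0 := fun i h => by
    have := hR (v i) h; simp only [hFadef, hFbdef]; linarith [this]
  -- key inequality
  suffices hkey : 0 ≤ ∑ i ∈ Finset.range (n-1), (φ (v (i+1)) - φ (v i)) * (Fb i - Fa i) by
    linarith [hφd]
  set T := Finset.range (n-1) with hTdef
  set T₂ := T.filter (fun i => vbar < v i) with hT2def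
  by_cases hT2 : T₂ = ∅
  · -- all grid points ≤ vbar : each term nonneg
    refine Finset.sum_nonneg fun i hi => ?_
    have hvi : ¬ vbar < v i := by
      intro h
      have : i ∈ T₂ := Finset.mem_filter.2 ⟨hi, h⟩
      simp [hT2] at this
    have hD := hDpos i (not_lt.1 hvi)
    have hin : i < n - 1 := Finset.mem_range.1 hi
    have hφpos : 0 ≤ φ (v (i+1)) - φ (v i) :=
      (sub_nonneg.2 (hφ.le_iff_le.2 (hvstrict i (i+1) (by omega) (by omega)).le))
    positivity
  · have hT2ne : T₂.Nonempty := Finset.nonempty_of_ne_empty hT2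
    set j := T₂.min' hT2ne with hjdef
    have hjmem : j ∈ T₂ := Finset.min'_mem _ _
    have hjT : j ∈ T := (Finset.mem_filter.1 hjmem).1
    have hjv : vbar < v j := (Finset.mem_filter.1 hjmem).2
    have hjn : j < n - 1 := Finset.mem_range.1 hjT
    have hjlt : v j < v (j+1) := hvstrict j (j+1) (by omega) (by omega)
    set c : ℝ := (φ (v (j+1)) - φ (v j)) / (v (j+1) - v j) with hcdef
    have hcpos : 0 < c := div_pos (sub_pos.2 (hφ hjlt)) (sub_pos.2 hjlt)
    have hterm : ∀ i ∈ T, c * ((v (i+1) - v i) * (Fb i - Fa i))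
        ≤ (φ (v (i+1)) - φ (v i)) * (Fb i - Fa i) := by
      intro i hi
      have hin : i < n - 1 := Finset.mem_range.1 hi
      have hilt : v i < v (i+1) := hvstrict i (i+1) (by omega) (by omega)
      have hsplit : φ (v (i+1)) - φ (v i)
          = (φ (v (i+1)) - φ (v i)) / (v (i+1) - v i) * (v (i+1) - v i) :=
        (div_mul_cancel₀ _ (sub_ne_zero.2 hilt.ne')).symm
      by_cases hvi : vbar < v i
      · -- right side: D ≤ 0, slope ≤ c
        have hD : Fb i - Fa i ≤ 0 := hDneg i hvi.le
        have hji : j ≤ i := Finset.min'_le _ _ (Finset.mem_filter.2 ⟨hi, hvi⟩)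
        have hslope : (φ (v (i+1)) - φ (v i)) / (v (i+1) - v i) ≤ c := by
          rcases eq_or_lt_of_le hji with h | h
          · rw [hcdef, h]
          · exact slope_le_slope' hconc hjlt hilt (hvle (j+1) i (by omega) (by omega))
        rw [hsplit, mul_assoc]
        have hDv : (v (i+1) - v i) * (Fb i - Fa i) ≤ 0 :=
          mul_nonpos_of_nonneg_of_nonpos (by linarith) hD
        exact mul_le_mul_of_nonpos_right hslope hDv
      · -- left side: D ≥ 0, slope ≥ c
        have hD : 0 ≤ Fb i - Fa i := hDpos i (not_lt.1 hvi)
        have hij : i < j := by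
          by_contra h
          push_neg at h
          exact hvi (lt_of_lt_of_le hjv (hvle j i h (by omega)))
        have hslope : c ≤ (φ (v (i+1)) - φ (v i)) / (v (i+1) - v i) :=
          slope_le_slope' hconc hilt hjlt (hvle (i+1) j (by omega) (by omega))
        rw [hsplit, mul_assoc]
        have hDv : 0 ≤ (v (i+1) - v i) * (Fb i - Fa i) :=
          mul_nonneg (by linarith) hD
        exact mul_le_mul_of_nonneg_right hslope hDv
    calc (0:ℝ) ≤ c * ∑ i ∈ T, (v (i+1) - v i) * (Fb i - Fa i) :=
          mul_nonneg hcpos.le hmean'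
      _ = ∑ i ∈ T, c * ((v (i+1) - v i) * (Fb i - Fa i)) := Finset.mul_sum _ _ _
      _ ≤ ∑ i ∈ T, (φ (v (i+1)) - φ (v i)) * (Fb i - Fa i) := Finset.sum_le_sum hterm
end

section
/- Let F, G be cumulative distribution functions of real random variables such that G single-crosses F from below: there exists v̄ with F(v) ≥ G(v) for v ≤ v̄ and G(v) ≥ F(v) for v ≥ v̄. If ∫ v dG(v) ≥ ∫ v dF(v), then for every increasing concave φ : ℝ → ℝ, ∫ φ(v) dG(v) ≥ ∫ φ(v) dF(v). (It suffices to prove this for distributions with finite support.) -/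
/-!
Take a supergradient `s` of `φ` at the crossing point `v̄`; it is nonnegative because `φ` is
increasing. Then `h = φ - s • id` increases up to `v̄`, decreases after it, and
`h v = h (min v v̄) + h (max v v̄) - h v̄`. Single crossing says exactly that `min X v̄` is
stochastically larger under `G` than under `F`, while `max X v̄` is stochastically smaller, which
matches the opposite monotonicities of the two pieces; hence `E_G h ≥ E_F h`. Finally
`E_G φ - E_F φ = (E_G h - E_F h) + s (E_G X - E_F X) ≥ 0`. First-order stochastic dominance for
finitely supported laws is Abel summation over the sorted joint support.
-/

open Finset

noncomputable def cdf {ι : Type*} [Fintype ι] (w v : ι → ℝ) (t : ℝ) : ℝ :=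
  ∑ i ∈ univ.filter (fun i => v i ≤ t), w i

section cdf

variable {ι : Type*} [Fintype ι] (w v : ι → ℝ) {c t : ℝ}

theorem cdf_min_of_lt (ht : t < c) : cdf w (fun i => min (v i) c) t = cdf w v t := by
  unfold cdf
  congr 1
  ext i
  simp [ht.not_ge]

theorem cdf_min_of_le (ht : c ≤ t) : cdf w (fun i => min (v i) c) t = ∑ i, w i := by
  unfold cdf
  rw [filter_true_of_mem fun i _ => (min_le_right _ _).trans ht]

theorem cdf_max_of_le (ht : c ≤ t) : cdf w (fun i => max (v i) c) t = cdf w v t := by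
  unfold cdf
  congr 1
  ext i
  simp [ht]

theorem cdf_max_of_lt (ht : t < c) : cdf w (fun i => max (v i) c) t = 0 := by
  unfold cdf
  rw [filter_false_of_mem fun i _ => not_le.2 (ht.trans_le (le_max_right _ _)), sum_empty]

end cdf

theorem Finset.exists_strictMonoOn_enum (T : Finset ℝ) :
    ∃ n, ∃ e : ℕ → ℝ, StrictMonoOn e (Set.Iio n) ∧ ∀ a ∈ T, ∃ m < n, e m = a := by
  let f := T.orderEmbOfFin rfl
  refine ⟨#T, fun k => if hk : k < #T then f ⟨k, hk⟩ else 0, ?_, fun a ha => ?_⟩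
  · intro k hk l hl hkl
    simp only [dif_pos (Set.mem_Iio.1 hk), dif_pos (Set.mem_Iio.1 hl)]
    exact f.strictMono (Fin.mk_lt_mk.2 hkl)
  · obtain ⟨⟨m, hm⟩, rfl⟩ : a ∈ Set.range f := by rwa [T.range_orderEmbOfFin rfl]
    exact ⟨m, hm, dif_pos hm⟩

theorem sum_mul_eq_sub_sum_cdf_mul {ι : Type*} [Fintype ι] {n : ℕ} {e : ℕ → ℝ}
    (he : StrictMonoOn e (Set.Iio n)) (w v : ι → ℝ) (hv : ∀ i, ∃ m < n, e m = v i) (h : ℝ → ℝ) :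
    ∑ i, w i * h (v i) = (∑ i, w i) * h (e (n - 1)) -
      ∑ k ∈ range (n - 1), cdf w v (e k) * (h (e (k + 1)) - h (e k)) := by
  have htel (m : ℕ) (hm : m < n) : ∑ k ∈ range (n - 1),
      (if e m ≤ e k then h (e (k + 1)) - h (e k) else 0) = h (e (n - 1)) - h (e m) := by
    have hfilter : (range (n - 1)).filter (fun k => e m ≤ e k) = Ico m (n - 1) := by
      ext k
      simp only [mem_filter, mem_range, mem_Ico]
      constructor
      · rintro ⟨hk, hle⟩
        exact ⟨(he.le_iff_le hm (show k < n by omega)).1 hle, hk⟩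
      · rintro ⟨hmk, hk⟩
        exact ⟨hk, (he.le_iff_le hm (show k < n by omega)).2 hmk⟩
    rw [← sum_filter, hfilter, sum_Ico_sub (fun k => h (e k)) (by omega)]
  calc ∑ i, w i * h (v i)
      = ∑ i, (w i * h (e (n - 1)) - w i * ∑ k ∈ range (n - 1),
          (if v i ≤ e k then h (e (k + 1)) - h (e k) else 0)) := by
        refine sum_congr rfl fun i _ => ?_
        obtain ⟨m, hm, hmi⟩ := hv i
        rw [← hmi, htel m hm]
        ring
    _ = _ := by
        simp only [sum_sub_distrib, mul_sum, cdf, sum_filter, sum_mul]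
        rw [sum_comm]
        congr 1
        refine sum_congr rfl fun k _ => sum_congr rfl fun i _ => ?_
        split_ifs <;> ring

theorem sum_mul_le_of_cdf_le {I J : Type*} [Fintype I] [Fintype J] {p : I → ℝ} {q : J → ℝ}
    {vF : I → ℝ} {vG : J → ℝ} (hpq : ∑ i, p i = ∑ j, q j) (hcdf : ∀ t, cdf q vG t ≤ cdf p vF t)
    {h : ℝ → ℝ} (hh : Monotone h) : ∑ i, p i * h (vF i) ≤ ∑ j, q j * h (vG j) := by
  obtain ⟨n, e, he, hT⟩ := (univ.image vF ∪ univ.image vG).exists_strictMonoOn_enum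
  rw [sum_mul_eq_sub_sum_cdf_mul he p vF (fun i => hT _ (by simp)) h,
    sum_mul_eq_sub_sum_cdf_mul he q vG (fun j => hT _ (by simp)) h, hpq]
  refine sub_le_sub_left (sum_le_sum fun k hk => mul_le_mul_of_nonneg_right (hcdf _) ?_) _
  have hk : k + 1 < n := by rw [mem_range] at hk; omega
  exact sub_nonneg.2 (hh (he.monotoneOn (show k < n by omega) hk (by omega)))

theorem sum_mul_le_of_cdf_le_of_antitone {I J : Type*} [Fintype I] [Fintype J] {p : I → ℝ}
    {q : J → ℝ} {vF : I → ℝ} {vG : J → ℝ} (hpq : ∑ i, p i = ∑ j, q j)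
    (hcdf : ∀ t, cdf p vF t ≤ cdf q vG t) {h : ℝ → ℝ} (hh : Antitone h) :
    ∑ i, p i * h (vF i) ≤ ∑ j, q j * h (vG j) := by
  have := sum_mul_le_of_cdf_le hpq.symm hcdf hh.neg
  simp only [mul_neg, sum_neg_distrib] at this
  linarith

theorem sum_mul_eq_sum_mul_min_add_sum_mul_max {ι : Type*} [Fintype ι] (w v : ι → ℝ)
    (h : ℝ → ℝ) (c : ℝ) :
    ∑ i, w i * h (v i) =
      ∑ i, w i * h (min (v i) c) + ∑ i, w i * h (max (v i) c) - (∑ i, w i) * h c := by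
  rw [sum_mul, ← sum_add_distrib, ← sum_sub_distrib]
  refine sum_congr rfl fun i _ => ?_
  rcases le_total (v i) c with hv | hv <;> simp [hv]

theorem sum_mul_le_of_singleCrossing_cdf {I J : Type*} [Fintype I] [Fintype J] {p : I → ℝ}
    {q : J → ℝ} {vF : I → ℝ} {vG : J → ℝ} (hpq : ∑ i, p i = ∑ j, q j) {c : ℝ}
    (hlow : ∀ t < c, cdf q vG t ≤ cdf p vF t) (hhigh : ∀ t ≥ c, cdf p vF t ≤ cdf q vG t)
    {h : ℝ → ℝ} (hmono : MonotoneOn h (Set.Iic c)) (hanti : AntitoneOn h (Set.Ici c)) :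
    ∑ i, p i * h (vF i) ≤ ∑ j, q j * h (vG j) := by
  have hlower : ∑ i, p i * h (min (vF i) c) ≤ ∑ j, q j * h (min (vG j) c) := by
    have := sum_mul_le_of_cdf_le (vF := fun i => min (vF i) c) (vG := fun j => min (vG j) c)
      (h := fun x => h (min x c)) hpq (fun t => ?_)
      fun x y hxy => hmono (min_le_right x c) (min_le_right y c) (min_le_min_right c hxy)
    · simpa only [min_assoc, min_self] using this
    rcases lt_or_ge t c with ht | ht
    · rw [cdf_min_of_lt _ _ ht, cdf_min_of_lt _ _ ht]
      exact hlow t ht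
    · rw [cdf_min_of_le _ _ ht, cdf_min_of_le _ _ ht, hpq]
  have hupper : ∑ i, p i * h (max (vF i) c) ≤ ∑ j, q j * h (max (vG j) c) := by
    have := sum_mul_le_of_cdf_le_of_antitone (vF := fun i => max (vF i) c)
      (vG := fun j => max (vG j) c) (h := fun x => h (max x c)) hpq (fun t => ?_)
      fun x y hxy => hanti (le_max_right x c) (le_max_right y c) (max_le_max_right c hxy)
    · simpa only [max_assoc, max_self] using this
    rcases lt_or_ge t c with ht | ht
    · rw [cdf_max_of_lt _ _ ht, cdf_max_of_lt _ _ ht]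
    · rw [cdf_max_of_le _ _ ht, cdf_max_of_le _ _ ht]
      exact hhigh t ht
  rw [sum_mul_eq_sum_mul_min_add_sum_mul_max p vF h c,
    sum_mul_eq_sum_mul_min_add_sum_mul_max q vG h c, hpq]
  linarith

theorem le_slope_iff_sub_mul_le {f : ℝ → ℝ} {s x y : ℝ} (hxy : x < y) :
    s ≤ slope f x y ↔ f x - s * x ≤ f y - s * y := by
  rw [slope_def_field, le_div_iff₀ (sub_pos.2 hxy)]
  constructor <;> intro h <;> linarith

theorem slope_le_iff_sub_mul_le {f : ℝ → ℝ} {s x y : ℝ} (hxy : x < y) :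
    slope f x y ≤ s ↔ f y - s * y ≤ f x - s * x := by
  rw [slope_def_field, div_le_iff₀ (sub_pos.2 hxy)]
  constructor <;> intro h <;> linarith

namespace ConcaveOn

variable {φ : ℝ → ℝ}

theorem slope_le_slope_of_lt (hφ : ConcaveOn ℝ Set.univ φ) {x y z : ℝ} (hxy : x < y)
    (hyz : y < z) : slope φ y z ≤ slope φ x y := by
  simpa only [slope_def_field] using hφ.slope_anti_adjacent trivial trivial hxy hyz

theorem exists_slope_le_le_slope (hφ : ConcaveOn ℝ Set.univ φ) (c : ℝ) :
    ∃ s, (∀ y, c < y → slope φ c y ≤ s) ∧ ∀ x, x < c → s ≤ slope φ x c := by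
  refine ⟨sSup (slope φ c '' Set.Ioi c),
    fun y hy => le_csSup ⟨slope φ (c - 1) c, ?_⟩ ⟨y, hy, rfl⟩,
    fun x hx => csSup_le ⟨_, c + 1, lt_add_one c, rfl⟩ ?_⟩
  · rintro _ ⟨y, hy, rfl⟩
    exact hφ.slope_le_slope_of_lt (sub_one_lt c) hy
  · rintro _ ⟨y, hy, rfl⟩
    exact hφ.slope_le_slope_of_lt hx hy

theorem exists_nonneg_monotoneOn_antitoneOn_sub_mul (hφ : ConcaveOn ℝ Set.univ φ)
    (hmono : Monotone φ) (c : ℝ) :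
    ∃ s, 0 ≤ s ∧ MonotoneOn (fun x => φ x - s * x) (Set.Iic c) ∧
      AntitoneOn (fun x => φ x - s * x) (Set.Ici c) := by
  obtain ⟨s, hright, hleft⟩ := hφ.exists_slope_le_le_slope c
  have hs : 0 ≤ s :=
    ((hmono.monotoneOn Set.univ).slope_nonneg trivial trivial).trans (hright _ (lt_add_one c))
  refine ⟨s, hs, fun x _ y (hy : y ≤ c) hxy => ?_, fun x (hx : c ≤ x) y _ hxy => ?_⟩
  · rcases hxy.eq_or_lt with rfl | hxy
    · rfl
    rw [← le_slope_iff_sub_mul_le hxy]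
    rcases hy.eq_or_lt with rfl | hyc
    · exact hleft x hxy
    · exact (hleft y hyc).trans (hφ.slope_le_slope_of_lt hxy hyc)
  · rcases hxy.eq_or_lt with rfl | hxy
    · rfl
    rw [← slope_le_iff_sub_mul_le hxy]
    rcases hx.eq_or_lt with rfl | hcx
    · exact hright y hxy
    · exact (hφ.slope_le_slope_of_lt hcx hxy).trans (hright x hcx)

end ConcaveOn

open Finset in
theorem stmt_9_general {I J : Type*} [Fintype I] [Fintype J]
    (p : I → ℝ) (q : J → ℝ) (vF : I → ℝ) (vG : J → ℝ)
    (hp1 : ∑ i, p i = 1) (hq1 : ∑ j, q j = 1)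
    (hsc : ∃ vbar : ℝ,
      (∀ v ≤ vbar, (∑ i ∈ univ.filter (fun i => vF i ≤ v), p i) ≥
          ∑ j ∈ univ.filter (fun j => vG j ≤ v), q j) ∧
      (∀ v ≥ vbar, (∑ j ∈ univ.filter (fun j => vG j ≤ v), q j) ≥
          ∑ i ∈ univ.filter (fun i => vF i ≤ v), p i))
    (hmean : ∑ j, q j * vG j ≥ ∑ i, p i * vF i)
    (φ : ℝ → ℝ) (hφ : Monotone φ) (hconc : ConcaveOn ℝ Set.univ φ) :
    ∑ j, q j * φ (vG j) ≥ ∑ i, p i * φ (vF i) := by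
  obtain ⟨vbar, hlow, hhigh⟩ := hsc
  obtain ⟨s, hs, hmonoOn, hantiOn⟩ := hconc.exists_nonneg_monotoneOn_antitoneOn_sub_mul hφ vbar
  have key := sum_mul_le_of_singleCrossing_cdf (hp1.trans hq1.symm) (fun t ht => hlow t ht.le)
    hhigh hmonoOn hantiOn
  simp only [mul_sub, sum_sub_distrib, mul_left_comm _ s, ← mul_sum] at key
  linarith [mul_nonneg hs (sub_nonneg.2 hmean)]

open Finset in
/-- Classical single-crossing theorem for finitely supported distributions.
`F` is supported on values `vF : I → ℝ` with weights `p`, and `G` on `vG : J → ℝ`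
with weights `q`. -/
theorem stmt_9 {I J : Type*} [Fintype I] [Fintype J] [DecidableEq I] [DecidableEq J]
    (p : I → ℝ) (q : J → ℝ) (vF : I → ℝ) (vG : J → ℝ)
    (hp : ∀ i, 0 ≤ p i) (hq : ∀ j, 0 ≤ q j)
    (hp1 : ∑ i, p i = 1) (hq1 : ∑ j, q j = 1)
    (hsc : ∃ vbar : ℝ,
      (∀ v ≤ vbar, (∑ i ∈ univ.filter (fun i => vF i ≤ v), p i) ≥
          ∑ j ∈ univ.filter (fun j => vG j ≤ v), q j) ∧
      (∀ v ≥ vbar, (∑ j ∈ univ.filter (fun j => vG j ≤ v), q j) ≥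
          ∑ i ∈ univ.filter (fun i => vF i ≤ v), p i))
    (hmean : ∑ j, q j * vG j ≥ ∑ i, p i * vF i)
    (φ : ℝ → ℝ) (hφ : Monotone φ) (hconc : ConcaveOn ℝ Set.univ φ) :
    ∑ j, q j * φ (vG j) ≥ ∑ i, p i * φ (vF i) :=
  stmt_9_general p q vF vG hp1 hq1 hsc hmean φ hφ hconc
end

section
/- Let d ∈ (0,1) and let S_d(θ) = min{θ, d} be debt. Let S : [0,1] → ℝ be any security (nondecreasing, θ − S(θ) nondecreasing, 0 ≤ S(θ) ≤ θ) with neither S_d nor S weakly dominating the other. Then S single-crosses S_d from below, and consequently debt is safer than S. -/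
/-!
Debt `min θ d` is capped at `d`, and `S θ ≤ θ` forces `S` below debt wherever `S θ ≤ d`.
A security is monotone with monotone residual `θ - S θ`, hence `1`-Lipschitz and continuous,
so by the intermediate value theorem it takes the value `d` at some `θbar` (it starts at
`S d ≤ d` and exceeds `d` wherever it beats debt). Monotonicity of `S` then puts `S` below debt
left of `θbar` and above the cap `d` right of it.
-/

open Set

theorem LipschitzOnWith.of_monotoneOn_of_monotoneOn_sub {s : Set ℝ} {f : ℝ → ℝ}
    (hf : MonotoneOn f s) (hres : MonotoneOn (fun x => x - f x) s) :
    LipschitzOnWith 1 f s := by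
  refine LipschitzOnWith.of_le_add fun x hx y hy => ?_
  rcases le_total x y with hxy | hyx
  · linarith [hf hx hy hxy, dist_nonneg (x := x) (y := y)]
  · have hres_yx : y - f y ≤ x - f x := hres hy hx hyx
    rw [Real.dist_eq, abs_of_nonneg (sub_nonneg.mpr hyx)]
    linarith

theorem lt_of_min_lt_of_le {α : Type*} [LinearOrder α] {a b c : α} (hca : c ≤ a)
    (h : min a b < c) : b < c :=
  (min_lt_iff.mp h).resolve_left hca.not_gt

theorem stmt_14_general (d : ℝ) (hd : d ∈ Set.Ioo (0:ℝ) 1) (S : ℝ → ℝ)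
    (hmono : MonotoneOn S (Set.Icc (0:ℝ) 1))
    (hfirm : MonotoneOn (fun θ => θ - S θ) (Set.Icc (0:ℝ) 1))
    (hll : ∀ θ ∈ Set.Icc (0:ℝ) 1, 0 ≤ S θ ∧ S θ ≤ θ)
    (hnd2 : ∃ θ ∈ Set.Icc (0:ℝ) 1, S θ > min θ d) :
    (∃ θbar : ℝ, (∀ θ ∈ Set.Icc (0:ℝ) 1, θ ≤ θbar → min θ d ≥ S θ) ∧
      (∀ θ ∈ Set.Icc (0:ℝ) 1, θ ≥ θbar → S θ ≥ min θ d)) ∧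
    (∀ θ ∈ Set.Icc (0:ℝ) 1, ∀ θ' ∈ Set.Icc (0:ℝ) 1,
      min θ d > S θ → S θ' > min θ' d → S θ' ≥ min θ d ∧ min θ' d ≥ S θ) := by
  have hdI : d ∈ Icc (0:ℝ) 1 := Ioo_subset_Icc_self hd
  obtain ⟨θ₁, hθ₁, hSθ₁⟩ := hnd2
  have hdSθ₁ : d < S θ₁ := lt_of_min_lt_of_le (hll θ₁ hθ₁).2 hSθ₁
  have hdθ₁ : d ≤ θ₁ := hdSθ₁.le.trans (hll θ₁ hθ₁).2
  have hsub : Icc d θ₁ ⊆ Icc 0 1 := Icc_subset_Icc hdI.1 hθ₁.2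
  have hcont : ContinuousOn S (Icc d θ₁) :=
    (LipschitzOnWith.of_monotoneOn_of_monotoneOn_sub hmono hfirm).continuousOn.mono hsub
  obtain ⟨θbar, hθbar, hSθbar⟩ :=
    intermediate_value_Icc hdθ₁ hcont ⟨(hll d hdI).2, hdSθ₁.le⟩
  have hθbarI : θbar ∈ Icc (0:ℝ) 1 := hsub hθbar
  refine ⟨⟨θbar, fun θ hθ hle => ?_, fun θ hθ hge => ?_⟩, fun θ hθ θ' hθ' hθS hθ'S => ?_⟩
  · exact le_min (hll θ hθ).2 (hSθbar ▸ hmono hθ hθbarI hle)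
  · exact (min_le_right θ d).trans (hSθbar ▸ hmono hθbarI hθ hge)
  · have hdSθ' : d < S θ' := lt_of_min_lt_of_le (hll θ' hθ').2 hθ'S
    have hSθd : S θ < d := hθS.trans_le (min_le_right θ d)
    exact ⟨(min_le_right θ d).trans hdSθ'.le,
      le_min (hSθd.trans (hdSθ'.trans_le (hll θ' hθ').2)).le hSθd.le⟩

theorem stmt_14 (d : ℝ) (hd : d ∈ Set.Ioo (0:ℝ) 1) (S : ℝ → ℝ)
    (hmono : MonotoneOn S (Set.Icc (0:ℝ) 1))
    (hfirm : MonotoneOn (fun θ => θ - S θ) (Set.Icc (0:ℝ) 1))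
    (hll : ∀ θ ∈ Set.Icc (0:ℝ) 1, 0 ≤ S θ ∧ S θ ≤ θ)
    (hnd1 : ∃ θ ∈ Set.Icc (0:ℝ) 1, min θ d > S θ)
    (hnd2 : ∃ θ ∈ Set.Icc (0:ℝ) 1, S θ > min θ d) :
    (∃ θbar : ℝ, (∀ θ ∈ Set.Icc (0:ℝ) 1, θ ≤ θbar → min θ d ≥ S θ) ∧
      (∀ θ ∈ Set.Icc (0:ℝ) 1, θ ≥ θbar → S θ ≥ min θ d)) ∧
    (∀ θ ∈ Set.Icc (0:ℝ) 1, ∀ θ' ∈ Set.Icc (0:ℝ) 1,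
      min θ d > S θ → S θ' > min θ' d → S θ' ≥ min θ d ∧ min θ' d ≥ S θ) :=
  stmt_14_general d hd S hmono hfirm hll hnd2
end

section
/- Let ρ ∈ (0,1) and let S_ρ(θ) = max{θ − ρ, 0} be a call option with strike ρ. Let S : [0,1] → ℝ be any security (nondecreasing, θ − S(θ) nondecreasing, 0 ≤ S(θ) ≤ θ) with neither weakly dominating the other. Then S_ρ single-crosses S from below, and consequently S is safer than the call option. -/
/-!
Write `D = S_ρ - S`. Where the call option is positive its slope is `1`, the largest slope a
security can have, so once `D` is positive it can only grow: the set where `D > 0` is an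
up-set of `[0, 1]`. Since `S` is `1`-Lipschitz, `D` is continuous, and `D 0 ≤ 0`; the largest
point of the closed down-set `{D ≤ 0}` is then the crossing point.
-/

open Set

section Security

variable {S : ℝ → ℝ} {s : Set ℝ}

lemma sub_le_sub_of_monotoneOn_sub_self (hfirm : MonotoneOn (fun θ => θ - S θ) s)
    {x y : ℝ} (hx : x ∈ s) (hy : y ∈ s) (hxy : x ≤ y) : S y - S x ≤ y - x := by
  have := hfirm hx hy hxy
  simp only at this
  linarith

lemma MonotoneOn.lipschitzOnWith_one_of_monotoneOn_sub_self (hmono : MonotoneOn S s)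
    (hfirm : MonotoneOn (fun θ => θ - S θ) s) : LipschitzOnWith 1 S s := by
  refine LipschitzOnWith.of_le_add fun x hx y hy => ?_
  rcases le_total x y with hxy | hyx
  · linarith [hmono hx hy hxy, dist_nonneg (x := x) (y := y)]
  · have := sub_le_sub_of_monotoneOn_sub_self hfirm hy hx hyx
    rw [Real.dist_eq, abs_of_nonneg (sub_nonneg.2 hyx)]
    linarith

lemma call_sub_le_call_sub_of_lt {ρ : ℝ} (hS0 : ∀ θ ∈ s, 0 ≤ S θ)
    (hfirm : MonotoneOn (fun θ => θ - S θ) s) {x y : ℝ} (hx : x ∈ s) (hy : y ∈ s)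
    (hxy : x ≤ y) (hlt : S x < max (x - ρ) 0) :
    max (x - ρ) 0 - S x ≤ max (y - ρ) 0 - S y := by
  have hρx : ρ < x := by
    rcases lt_max_iff.1 hlt with h | h <;> linarith [hS0 x hx]
  rw [max_eq_left (by linarith), max_eq_left (by linarith)]
  linarith [sub_le_sub_of_monotoneOn_sub_self hfirm hx hy hxy]

end Security

theorem exists_crossing_of_pos_imp_pos {D : ℝ → ℝ} {a b : ℝ} (hD : ContinuousOn D (Icc a b))
    (ha : D a ≤ 0) (hpos : ∃ p ∈ Icc a b, 0 < D p)
    (hup : ∀ x ∈ Icc a b, ∀ y ∈ Icc a b, x ≤ y → 0 < D x → 0 < D y) :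
    ∃ c, (∀ x ∈ Icc a b, x ≤ c → D x ≤ 0) ∧ (∀ x ∈ Icc a b, c ≤ x → 0 ≤ D x) := by
  obtain ⟨p, hp, hDp⟩ := hpos
  set Z := Icc a b ∩ D ⁻¹' Iic 0
  have hZbdd : BddAbove Z := bddAbove_Icc.mono inter_subset_left
  have hcZ : sSup Z ∈ Z :=
    (hD.preimage_isClosed_of_isClosed isClosed_Icc isClosed_Iic).csSup_mem
      ⟨a, left_mem_Icc.2 (hp.1.trans hp.2), ha⟩ hZbdd
  have below : ∀ x ∈ Icc a b, x ≤ sSup Z → D x ≤ 0 := fun x hx hxc =>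
    not_lt.1 fun h => (hup x hx _ hcZ.1 hxc h).not_ge hcZ.2
  have above : ∀ x ∈ Icc a b, sSup Z < x → 0 < D x := fun x hx hcx =>
    not_le.1 fun h => hcx.not_ge (le_csSup hZbdd ⟨hx, h⟩)
  refine ⟨sSup Z, below, fun x hx hcx => ?_⟩
  rcases hcx.lt_or_eq with hlt | rfl
  · exact (above x hx hlt).le
  have hcp : sSup Z < p := not_le.1 fun h => (below p hp h).not_gt hDp
  have hsub : Ioc (sSup Z) p ⊆ Icc a b := Ioc_subset_Icc_self.trans (Icc_subset_Icc hcZ.1.1 hp.2)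
  have hclos : sSup Z ∈ closure (Ioc (sSup Z) p) := by
    rw [closure_Ioc hcp.ne]
    exact left_mem_Icc.2 hcp.le
  exact continuousWithinAt_const.closure_le hclos ((hD _ hx).mono hsub)
    fun y hy => (above y (hsub hy) hy.1).le

theorem stmt_15_general (ρ : ℝ) (hρ : ρ ∈ Set.Ioo (0:ℝ) 1) (S : ℝ → ℝ)
    (hmono : MonotoneOn S (Set.Icc (0:ℝ) 1))
    (hfirm : MonotoneOn (fun θ => θ - S θ) (Set.Icc (0:ℝ) 1))
    (hll : ∀ θ ∈ Set.Icc (0:ℝ) 1, 0 ≤ S θ ∧ S θ ≤ θ)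
    (hnd2 : ∃ θ ∈ Set.Icc (0:ℝ) 1, max (θ - ρ) 0 > S θ) :
    (∃ θbar : ℝ, (∀ θ ∈ Set.Icc (0:ℝ) 1, θ ≤ θbar → S θ ≥ max (θ - ρ) 0) ∧
      (∀ θ ∈ Set.Icc (0:ℝ) 1, θ ≥ θbar → max (θ - ρ) 0 ≥ S θ)) ∧
    (∀ θ ∈ Set.Icc (0:ℝ) 1, ∀ θ' ∈ Set.Icc (0:ℝ) 1,
      S θ > max (θ - ρ) 0 → max (θ' - ρ) 0 > S θ' →
        max (θ' - ρ) 0 ≥ S θ ∧ S θ' ≥ max (θ - ρ) 0) := by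
  set D : ℝ → ℝ := fun θ => max (θ - ρ) 0 - S θ
  have hup : ∀ x ∈ Icc (0:ℝ) 1, ∀ y ∈ Icc (0:ℝ) 1, x ≤ y → 0 < D x → 0 < D y :=
    fun x hx y hy hxy h => h.trans_le <| call_sub_le_call_sub_of_lt (fun θ hθ => (hll θ hθ).1)
      hfirm hx hy hxy (sub_pos.1 h)
  refine ⟨?_, fun θ hθ θ' hθ' hSθ hSθ' => ?_⟩
  · have hD : ContinuousOn D (Icc 0 1) :=
      ((continuous_sub_right ρ).max continuous_const).continuousOn.sub
        (hmono.lipschitzOnWith_one_of_monotoneOn_sub_self hfirm).continuousOn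
    have hD0 : D 0 ≤ 0 := by
      simp only [D, zero_sub, max_eq_right (neg_nonpos.2 hρ.1.le), neg_nonpos]
      exact (hll 0 (left_mem_Icc.2 zero_le_one)).1
    obtain ⟨θbar, hbelow, habove⟩ := exists_crossing_of_pos_imp_pos hD hD0
      (by simpa only [D, sub_pos] using hnd2) hup
    exact ⟨θbar, fun θ hθ h => sub_nonpos.1 (hbelow θ hθ h),
      fun θ hθ h => sub_nonneg.1 (habove θ hθ h)⟩
  · have hθθ' : θ ≤ θ' := le_of_not_ge fun h =>
      (hup θ' hθ' θ hθ h (sub_pos.2 hSθ')).not_ge (sub_nonpos.2 hSθ.le)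
    have := hmono hθ hθ' hθθ'
    constructor <;> linarith

theorem stmt_15 (ρ : ℝ) (hρ : ρ ∈ Set.Ioo (0:ℝ) 1) (S : ℝ → ℝ)
    (hmono : MonotoneOn S (Set.Icc (0:ℝ) 1))
    (hfirm : MonotoneOn (fun θ => θ - S θ) (Set.Icc (0:ℝ) 1))
    (hll : ∀ θ ∈ Set.Icc (0:ℝ) 1, 0 ≤ S θ ∧ S θ ≤ θ)
    (hnd1 : ∃ θ ∈ Set.Icc (0:ℝ) 1, S θ > max (θ - ρ) 0)
    (hnd2 : ∃ θ ∈ Set.Icc (0:ℝ) 1, max (θ - ρ) 0 > S θ) :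
    (∃ θbar : ℝ, (∀ θ ∈ Set.Icc (0:ℝ) 1, θ ≤ θbar → S θ ≥ max (θ - ρ) 0) ∧
      (∀ θ ∈ Set.Icc (0:ℝ) 1, θ ≥ θbar → max (θ - ρ) 0 ≥ S θ)) ∧
    (∀ θ ∈ Set.Icc (0:ℝ) 1, ∀ θ' ∈ Set.Icc (0:ℝ) 1,
      S θ > max (θ - ρ) 0 → max (θ' - ρ) 0 > S θ' →
        max (θ' - ρ) 0 ≥ S θ ∧ S θ' ≥ max (θ - ρ) 0) :=
  stmt_15_general ρ hρ S hmono hfirm hll hnd2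
end

section
/- Consider a symmetric 2×2 coordination game with payoffs: u(a,a) = α₁, u(b,b) = β₂, u(a,b) = α₂, u(b,a) = β₁ (first argument own action, second opponent's), where α₁ > β₁ and β₂ > α₂. Then for every probability x ∈ [0,1] of the opponent playing b and every strictly increasing concave φ: (1−x)α₁ + xα₂ ≥ (1−x)β₁ + xβ₂ implies (1−x)φ(α₁) + xφ(α₂) ≥ (1−x)φ(β₁) + xφ(β₂), for all such x and φ, if and only if α₂ ≥ β₁ and β₂ ≥ α₁. -/
private lemma kinkStrictMono (c : ℝ) :
    StrictMono (fun t : ℝ => min t (c + (1/2) * (t - c))) := by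
  intro a b hab
  exact min_lt_min hab (by linarith)

private lemma kinkConcave (c : ℝ) :
    ConcaveOn ℝ Set.univ (fun t : ℝ => min t (c + (1/2) * (t - c))) := by
  refine ⟨convex_univ, fun x _ y _ a b ha hb hab => ?_⟩
  simp only [smul_eq_mul]
  have h1 := min_le_left x (c + (1/2) * (x - c))
  have h2 := min_le_right x (c + (1/2) * (x - c))
  have h3 := min_le_left y (c + (1/2) * (y - c))
  have h4 := min_le_right y (c + (1/2) * (y - c))
  have habc : a * c + b * c = c := by linear_combination c * hab
  refine le_min ?_ ?_
  · nlinarith [mul_le_mul_of_nonneg_left h1 ha, mul_le_mul_of_nonneg_left h3 hb]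
  · nlinarith [mul_le_mul_of_nonneg_left h2 ha, mul_le_mul_of_nonneg_left h4 hb, habc]

private lemma chord (φ : ℝ → ℝ) (hconc : ConcaveOn ℝ Set.univ φ) {p q t : ℝ}
    (hpq : p < q) (h1 : p ≤ t) (h2 : t ≤ q) :
    (q - t) * φ p + (t - p) * φ q ≤ (q - p) * φ t := by
  have hd : 0 < q - p := by linarith
  have hne : q - p ≠ 0 := hd.ne'
  have ha : (0:ℝ) ≤ (q - t)/(q - p) := div_nonneg (by linarith) hd.le
  have hb : (0:ℝ) ≤ (t - p)/(q - p) := div_nonneg (by linarith) hd.le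
  have hab : (q - t)/(q - p) + (t - p)/(q - p) = 1 := by field_simp; ring
  have key := hconc.2 (Set.mem_univ p) (Set.mem_univ q) ha hb hab
  have ht : ((q - t)/(q - p)) • p + ((t - p)/(q - p)) • q = t := by
    simp only [smul_eq_mul]; field_simp; ring
  rw [ht] at key
  simp only [smul_eq_mul] at key
  have hrw : (q - t)/(q - p) * φ p + (t - p)/(q - p) * φ q
      = ((q - t) * φ p + (t - p) * φ q) / (q - p) := by ring
  rw [hrw, div_le_iff₀ hd] at key
  linarith [key, mul_comm (φ t) (q - p)]

theorem stmt_16 (α₁ α₂ β₁ β₂ : ℝ) (h1 : α₁ > β₁) (h2 : β₂ > α₂) :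
    (∀ x ∈ Set.Icc (0:ℝ) 1, ∀ φ : ℝ → ℝ, StrictMono φ → ConcaveOn ℝ Set.univ φ →
      ((1 - x) * α₁ + x * α₂ ≥ (1 - x) * β₁ + x * β₂ →
        (1 - x) * φ α₁ + x * φ α₂ ≥ (1 - x) * φ β₁ + x * φ β₂)) ↔
    (α₂ ≥ β₁ ∧ β₂ ≥ α₁) := by
  have hD1 : 0 < α₁ - β₁ := by linarith
  have hD2 : 0 < β₂ - α₂ := by linarith
  have hden : 0 < (α₁ - β₁) + (β₂ - α₂) := by linarith
  set x : ℝ := (α₁ - β₁) / ((α₁ - β₁) + (β₂ - α₂)) with hxdef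
  have hx0 : 0 < x := div_pos hD1 hden
  have hx1 : x < 1 := (div_lt_one hden).2 (by linarith)
  have hkey : (1 - x) * (α₁ - β₁) = x * (β₂ - α₂) := by
    rw [hxdef]; field_simp; ring
  have hpayx : (1 - x) * α₁ + x * α₂ ≥ (1 - x) * β₁ + x * β₂ := by nlinarith [hkey]
  constructor
  · intro H
    constructor
    · by_contra hc
      push_neg at hc  -- hc : α₂ < β₁
      have h := H x ⟨hx0.le, hx1.le⟩ (fun t : ℝ => min t (β₁ + (1/2) * (t - β₁)))
        (kinkStrictMono β₁) (kinkConcave β₁) hpayx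
      have e1 : min α₂ (β₁ + (1/2) * (α₂ - β₁)) = α₂ := min_eq_left (by linarith)
      have e2 : min β₁ (β₁ + (1/2) * (β₁ - β₁)) = β₁ := by norm_num
      have e3 : min α₁ (β₁ + (1/2) * (α₁ - β₁)) = β₁ + (1/2) * (α₁ - β₁) :=
        min_eq_right (by linarith)
      rw [e1, e2, e3] at h
      rcases le_total β₁ β₂ with hb | hb
      · have e4 : min β₂ (β₁ + (1/2) * (β₂ - β₁)) = β₁ + (1/2) * (β₂ - β₁) :=
          min_eq_right (by linarith)
        rw [e4] at h
        nlinarith [h, hkey, mul_pos hx0 (show (0:ℝ) < β₁ - α₂ by linarith)]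
      · have e4 : min β₂ (β₁ + (1/2) * (β₂ - β₁)) = β₂ := min_eq_left (by linarith)
        rw [e4] at h
        nlinarith [h, hkey, mul_pos hx0 hD2]
    · by_contra hc
      push_neg at hc  -- hc : β₂ < α₁
      have h := H x ⟨hx0.le, hx1.le⟩ (fun t : ℝ => min t (β₂ + (1/2) * (t - β₂)))
        (kinkStrictMono β₂) (kinkConcave β₂) hpayx
      have e1 : min α₂ (β₂ + (1/2) * (α₂ - β₂)) = α₂ := min_eq_left (by linarith)
      have e2 : min β₂ (β₂ + (1/2) * (β₂ - β₂)) = β₂ := by norm_num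
      have e3 : min α₁ (β₂ + (1/2) * (α₁ - β₂)) = β₂ + (1/2) * (α₁ - β₂) :=
        min_eq_right (by linarith)
      rw [e1, e2, e3] at h
      rcases le_total β₁ β₂ with hb | hb
      · have e4 : min β₁ (β₂ + (1/2) * (β₁ - β₂)) = β₁ := min_eq_left (by linarith)
        rw [e4] at h
        nlinarith [h, hkey, mul_pos (show (0:ℝ) < 1 - x by linarith)
          (show (0:ℝ) < α₁ - β₂ by linarith)]
      · have e4 : min β₁ (β₂ + (1/2) * (β₁ - β₂)) = β₂ + (1/2) * (β₁ - β₂) :=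
          min_eq_right (by linarith)
        rw [e4] at h
        nlinarith [h, hkey, mul_pos (show (0:ℝ) < 1 - x by linarith) hD1]
  · rintro ⟨hA, hB⟩ y hy φ hmono hconc hpay
    obtain ⟨hy0, hy1⟩ := hy
    have hb12 : β₁ < β₂ := by linarith
    have c1 := chord φ hconc hb12 h1.le hB
    have c2 := chord φ hconc hb12 hA h2.le
    have hmφ : φ β₁ ≤ φ β₂ := hmono.le_iff_le.2 hb12.le
    nlinarith [mul_le_mul_of_nonneg_left c1 (show (0:ℝ) ≤ 1 - y by linarith),
      mul_le_mul_of_nonneg_left c2 hy0,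
      mul_nonneg (sub_nonneg.2 hpay) (sub_nonneg.2 hmφ),
      sub_pos.2 hb12]
end
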